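/- Every variety V with right existentially definable factor congruences (RexDFC) that is stable by complements has twice existentially definable factor congruences (TexDFC): there exist existential first-order L-formulas λ(z⃗,x,y) and ρ(z⃗,x,y) such that for all A, B ∈ V, a, b ∈ A and c, d ∈ B: A×B ⊨ λ([0⃗,1⃗],(a,c),(b,d)) if and only if c = d, and A×B ⊨ ρ([0⃗,1⃗],(a,c),(b,d)) if and only if a = b. -/

import Mathlib

open FirstOrder FirstOrder.Language FirstOrder.Language.Structure

universe u v w

namespace Paper

variable {L : FirstOrder.Language.{0, 0}}

/-- A congruence on an `L`-algebra: an equivalence relation compatible with all operations. -/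
structure AlgCon (L : FirstOrder.Language.{0, 0}) (A : Type u) [L.Structure A] where
  r : A → A → Prop
  refl : ∀ a, r a a
  symm : ∀ {a b}, r a b → r b a
  trans : ∀ {a b c}, r a b → r b c → r a c
  compat : ∀ {m : ℕ} (f : L.Functions m) (x y : Fin m → A),
    (∀ i, r (x i) (y i)) → r (funMap f x) (funMap f y)

namespace AlgCon

variable {A : Type u} [L.Structure A]

theorem ext' {c d : AlgCon L A} (h : ∀ a b, c.r a b ↔ d.r a b) : c = d := by
  cases c; cases d
  simp only [AlgCon.mk.injEq]
  funext a b
  exact propext (h a b)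

/-- The identity (diagonal) congruence Δ. -/
def delta (L : FirstOrder.Language.{0, 0}) (A : Type u) [L.Structure A] : AlgCon L A where
  r := Eq
  refl := fun _ => rfl
  symm := fun h => h.symm
  trans := fun h1 h2 => h1.trans h2
  compat := fun f x y h => by rw [funext h]

/-- The universal congruence ∇. -/
def nabla (L : FirstOrder.Language.{0, 0}) (A : Type u) [L.Structure A] : AlgCon L A where
  r := fun _ _ => True
  refl := fun _ => trivial
  symm := fun _ => trivial
  trans := fun _ _ => trivial
  compat := fun _ _ _ _ => trivial

/-- Meet (intersection) of congruences. -/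
def inf (c d : AlgCon L A) : AlgCon L A where
  r := fun a b => c.r a b ∧ d.r a b
  refl := fun a => ⟨c.refl a, d.refl a⟩
  symm := fun h => ⟨c.symm h.1, d.symm h.2⟩
  trans := fun h1 h2 => ⟨c.trans h1.1 h2.1, d.trans h1.2 h2.2⟩
  compat := fun f x y h =>
    ⟨c.compat f x y fun i => (h i).1, d.compat f x y fun i => (h i).2⟩

/-- Relational composition of congruences (as a binary relation). -/
def comp (c d : AlgCon L A) (a b : A) : Prop := ∃ z, c.r a z ∧ d.r z b

/-- The congruence generated by a binary relation. -/
def conGen (L : FirstOrder.Language.{0, 0}) {A : Type u} [L.Structure A]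
    (R : A → A → Prop) : AlgCon L A where
  r := fun a b => ∀ c : AlgCon L A, (∀ x y, R x y → c.r x y) → c.r a b
  refl := fun a _ _ => AlgCon.refl _ a
  symm := fun h c hc => c.symm (h c hc)
  trans := fun h1 h2 c hc => c.trans (h1 c hc) (h2 c hc)
  compat := fun f x y h c hc => c.compat f x y fun i => h i c hc

/-- Join of congruences in the congruence lattice. -/
def sup (c d : AlgCon L A) : AlgCon L A :=
  conGen L (fun a b => c.r a b ∨ d.r a b)

end AlgCon

/-- The principal congruence θ(a⃗, b⃗) generated by the pairs (aᵢ, bᵢ). -/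
def thetaPairs {A : Type u} [L.Structure A] {n : ℕ} (a b : Fin n → A) : AlgCon L A :=
  AlgCon.conGen L (fun x y => ∃ i, x = a i ∧ y = b i)

/-- The congruence θ(S) generated by S × S. -/
def thetaSet {A : Type u} [L.Structure A] (S : Set A) : AlgCon L A :=
  AlgCon.conGen L (fun x y => x ∈ S ∧ y ∈ S)

/-- `[a⃗, b⃗] ∈ θ`: all pairs (aᵢ, bᵢ) belong to the congruence θ. -/
def inCon {A : Type u} [L.Structure A] {n : ℕ} (θ : AlgCon L A) (a b : Fin n → A) : Prop :=
  ∀ i, θ.r (a i) (b i)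

/-- θ and δ are complementary factor congruences: θ ∩ δ = Δ and θ ∘ δ = ∇. -/
def IsComplFC {A : Type u} [L.Structure A] (θ δ : AlgCon L A) : Prop :=
  θ.inf δ = AlgCon.delta L A ∧ ∀ a b : A, θ.comp δ a b

/-- The set of factor congruences of `A`. -/
def FC (L : FirstOrder.Language.{0, 0}) (A : Type u) [L.Structure A] : Set (AlgCon L A) :=
  {θ | ∃ δ, IsComplFC θ δ}

/-- `S` is a Boolean sublattice of the congruence lattice of `A`: it contains Δ and ∇,
is closed under meet and join, is distributive, and every element has a complement in `S`. -/
def IsBooleanSublattice {A : Type u} [L.Structure A] (S : Set (AlgCon L A)) : Prop :=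
  AlgCon.delta L A ∈ S ∧ AlgCon.nabla L A ∈ S ∧
  (∀ θ ∈ S, ∀ δ ∈ S, θ.inf δ ∈ S) ∧
  (∀ θ ∈ S, ∀ δ ∈ S, θ.sup δ ∈ S) ∧
  (∀ θ ∈ S, ∀ δ ∈ S, ∀ γ ∈ S, θ.inf (δ.sup γ) = (θ.inf δ).sup (θ.inf γ)) ∧
  (∀ θ ∈ S, ∃ δ ∈ S, θ.inf δ = AlgCon.delta L A ∧ θ.sup δ = AlgCon.nabla L A)

/-- An identity (equation between two terms in finitely many variables). -/
structure Identity (L : FirstOrder.Language.{0, 0}) where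
  nvars : ℕ
  lhs : L.Term (Fin nvars)
  rhs : L.Term (Fin nvars)

/-- An identity holds in an algebra. -/
def Identity.Holds (e : Identity L) (A : Type u) [L.Structure A] : Prop :=
  ∀ v : Fin e.nvars → A, e.lhs.realize v = e.rhs.realize v

/-- Membership of an algebra in the variety axiomatized by the set of identities `E`. -/
def InVariety (E : Set (Identity L)) (A : Type u) [L.Structure A] : Prop :=
  ∀ e ∈ E, e.Holds A

/-- The data of the closed terms 0₁, …, 0ₙ and 1₁, …, 1ₙ. -/
structure ZeroOneData (L : FirstOrder.Language.{0, 0}) where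
  n : ℕ
  npos : 0 < n
  zero : Fin n → L.Term Empty
  one : Fin n → L.Term Empty

/-- The interpretation of the tuple 0⃗ in an algebra. -/
def ZeroOneData.zeroA (Z : ZeroOneData L) (A : Type u) [L.Structure A] : Fin Z.n → A :=
  fun i => (Z.zero i).realize Empty.elim

/-- The interpretation of the tuple 1⃗ in an algebra. -/
def ZeroOneData.oneA (Z : ZeroOneData L) (A : Type u) [L.Structure A] : Fin Z.n → A :=
  fun i => (Z.one i).realize Empty.elim

/-- `V ⊨ (0⃗ ≈ 1⃗) → x ≈ y`: `V` is a variety with 0⃗ and 1⃗. -/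
def ZeroOneData.Separates (Z : ZeroOneData L) (E : Set (Identity L)) : Prop :=
  ∀ (A : Type u) [L.Structure A], InVariety E A →
    (∀ i, Z.zeroA A i = Z.oneA A i) → Subsingleton A

/-- Product structure on `A × B`. -/
instance prodStructure (A : Type u) (B : Type u) [L.Structure A] [L.Structure B] :
    L.Structure (A × B) where
  funMap := fun f x => (funMap f (fun i => (x i).1), funMap f (fun i => (x i).2))
  RelMap := fun r x => RelMap r (fun i => (x i).1) ∧ RelMap r (fun i => (x i).2)

/-- A witness that `e⃗` is a central element of `A`: an isomorphism
`τ : A ≅ A₁ × A₂` with `A₁, A₂ ∈ V` and `τ(e⃗) = [0⃗, 1⃗]`. -/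
structure CentralWitness (E : Set (Identity L)) (Z : ZeroOneData L)
    (A : Type u) [L.Structure A] (e : Fin Z.n → A) : Type (u + 1) where
  A₁ : Type u
  A₂ : Type u
  [s₁ : L.Structure A₁]
  [s₂ : L.Structure A₂]
  mem₁ : InVariety E A₁
  mem₂ : InVariety E A₂
  iso : A ≃[L] (A₁ × A₂)
  he : ∀ i, iso (e i) = (Z.zeroA A₁ i, Z.oneA A₂ i)

/-- A witness that `e⃗` and `f⃗` are complementary central elements of `A`. -/
structure ComplCentralWitness (E : Set (Identity L)) (Z : ZeroOneData L)
    (A : Type u) [L.Structure A] (e f : Fin Z.n → A) extends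
    CentralWitness E Z A e : Type (u + 1) where
  hf : ∀ i, iso (f i) = (Z.oneA A₁ i, Z.zeroA A₂ i)

/-- `e⃗` is a central element of `A`. -/
def IsCentral (E : Set (Identity L)) (Z : ZeroOneData L)
    (A : Type u) [L.Structure A] (e : Fin Z.n → A) : Prop :=
  Nonempty (CentralWitness E Z A e)

/-- `e⃗ ⋄_A f⃗`: `e⃗` and `f⃗` are complementary central elements of `A`. -/
def CentDiamond (E : Set (Identity L)) (Z : ZeroOneData L)
    (A : Type u) [L.Structure A] (e f : Fin Z.n → A) : Prop :=
  Nonempty (ComplCentralWitness E Z A e f)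

/-- `V` has Boolean factor congruences: for every `A ∈ V`, `FC(A)` is a Boolean
sublattice of `Con(A)`. -/
def HasBFC (E : Set (Identity L)) : Prop :=
  ∀ (A : Type u) [L.Structure A], InVariety E A → IsBooleanSublattice (FC L A)

/-- `V` is stable by complements: every homomorphism between members of `V`
preserves complementary central elements. -/
def StableByComplements (E : Set (Identity L)) (Z : ZeroOneData L) : Prop :=
  ∀ (A B : Type u) [L.Structure A] [L.Structure B], InVariety E A → InVariety E B →
    ∀ (f : A →[L] B) (e g : Fin Z.n → A), CentDiamond E Z A e g →
      CentDiamond E Z B (fun i => f (e i)) (fun i => f (g i))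

/-- A formula is existential: of the form ∃w⃗ ψ with ψ quantifier-free. -/
def IsExistentialForm {α : Type*} (φ : L.Formula α) : Prop :=
  ∃ (m : ℕ) (ψ : L.BoundedFormula α m), ψ.IsQF ∧ φ = ψ.exs

/-- The formula λ(z⃗, x, y) satisfies the condition (R): for all `A, B ∈ V`,
`A × B ⊨ λ([0⃗,1⃗], (a,c), (b,d))` iff `c = d`. -/
def RightFormulaWorks (E : Set (Identity L)) (Z : ZeroOneData L)
    (φ : L.Formula ((Fin Z.n) ⊕ (Fin 2))) : Prop :=
  ∀ (A B : Type u) [L.Structure A] [L.Structure B], InVariety E A → InVariety E B →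
    ∀ (a b : A) (c d : B),
      (φ.Realize (M := A × B)
        (Sum.elim (fun i => (Z.zeroA A i, Z.oneA B i)) ![(a, c), (b, d)]) ↔ c = d)

/-- The formula ρ(z⃗, x, y) satisfies the condition (L): for all `A, B ∈ V`,
`A × B ⊨ ρ([0⃗,1⃗], (a,c), (b,d))` iff `a = b`. -/
def LeftFormulaWorks (E : Set (Identity L)) (Z : ZeroOneData L)
    (φ : L.Formula ((Fin Z.n) ⊕ (Fin 2))) : Prop :=
  ∀ (A B : Type u) [L.Structure A] [L.Structure B], InVariety E A → InVariety E B →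
    ∀ (a b : A) (c d : B),
      (φ.Realize (M := A × B)
        (Sum.elim (fun i => (Z.zeroA A i, Z.oneA B i)) ![(a, c), (b, d)]) ↔ a = b)

/-- `V` has right existentially definable factor congruences. -/
def HasRexDFC (E : Set (Identity L)) (Z : ZeroOneData L) : Prop :=
  HasBFC.{u} E ∧ ∃ φ : L.Formula ((Fin Z.n) ⊕ (Fin 2)),
    IsExistentialForm φ ∧ RightFormulaWorks.{u} E Z φ

/-- `V` has left existentially definable factor congruences. -/
def HasLexDFC (E : Set (Identity L)) (Z : ZeroOneData L) : Prop :=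
  HasBFC.{u} E ∧ ∃ φ : L.Formula ((Fin Z.n) ⊕ (Fin 2)),
    IsExistentialForm φ ∧ LeftFormulaWorks.{u} E Z φ

/-- `(θ, δ)` is the pair of complementary factor congruences associated with the
central element `e⃗`, i.e. `θ ⋄ δ`, `[e⃗,0⃗] ∈ θ` and `[e⃗,1⃗] ∈ δ`. -/
def PairFor (Z : ZeroOneData L) (A : Type u) [L.Structure A]
    (e : Fin Z.n → A) (θ δ : AlgCon L A) : Prop :=
  IsComplFC θ δ ∧ inCon θ e (Z.zeroA A) ∧ inCon δ e (Z.oneA A)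

/-- `a⃗ = e⃗ ∧ f⃗` in the center: `[a⃗,0⃗] ∈ θ_{0,e} ∩ θ_{0,f}` and `[a⃗,1⃗] ∈ θ_{1,e} ∨ θ_{1,f}`. -/
def IsMeetOf (Z : ZeroOneData L) (A : Type u) [L.Structure A]
    (e f a : Fin Z.n → A) : Prop :=
  ∃ θ₀e θ₁e θ₀f θ₁f : AlgCon L A, PairFor Z A e θ₀e θ₁e ∧ PairFor Z A f θ₀f θ₁f ∧
    inCon (θ₀e.inf θ₀f) a (Z.zeroA A) ∧ inCon (θ₁e.sup θ₁f) a (Z.oneA A)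

/-- `a⃗ = e⃗ ∨ f⃗` in the center: `[a⃗,0⃗] ∈ θ_{0,e} ∨ θ_{0,f}` and `[a⃗,1⃗] ∈ θ_{1,e} ∩ θ_{1,f}`. -/
def IsJoinOf (Z : ZeroOneData L) (A : Type u) [L.Structure A]
    (e f a : Fin Z.n → A) : Prop :=
  ∃ θ₀e θ₁e θ₀f θ₁f : AlgCon L A, PairFor Z A e θ₀e θ₁e ∧ PairFor Z A f θ₀f θ₁f ∧
    inCon (θ₀e.sup θ₀f) a (Z.zeroA A) ∧ inCon (θ₁e.inf θ₁f) a (Z.oneA A)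

/-- `a⃗ = e⃗^c` in the center: `[a⃗,1⃗] ∈ θ_{0,e}` and `[a⃗,0⃗] ∈ θ_{1,e}`. -/
def IsComplOf (Z : ZeroOneData L) (A : Type u) [L.Structure A]
    (e a : Fin Z.n → A) : Prop :=
  ∃ θ₀e θ₁e : AlgCon L A, PairFor Z A e θ₀e θ₁e ∧
    inCon θ₀e a (Z.oneA A) ∧ inCon θ₁e a (Z.zeroA A)

section Quotient

variable {A : Type u} [L.Structure A]

/-- The setoid underlying a congruence. -/
def AlgCon.setoid (c : AlgCon L A) : Setoid A :=
  ⟨c.r, ⟨c.refl, fun h => c.symm h, fun h1 h2 => c.trans h1 h2⟩⟩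

/-- The quotient algebra `A/θ`. -/
def ConQuot (c : AlgCon L A) : Type u := Quotient c.setoid

/-- The class of `a` in `A/θ`. -/
def ConQuot.mk (c : AlgCon L A) (a : A) : ConQuot c := Quotient.mk c.setoid a

noncomputable instance conQuotStructure (c : AlgCon L A) : L.Structure (ConQuot c) where
  funMap := fun f x => ConQuot.mk c (funMap f (fun i => (Quotient.out (α := A) (s := c.setoid) (x i))))
  RelMap := fun r x => ∃ as : Fin _ → A, (∀ i, ConQuot.mk c (as i) = x i) ∧ RelMap r as

theorem conQuot_funMap_mk (c : AlgCon L A) {m : ℕ} (f : L.Functions m) (as : Fin m → A) :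
    funMap f (fun i => ConQuot.mk c (as i)) = ConQuot.mk c (funMap f as) := by
  show ConQuot.mk c _ = ConQuot.mk c _
  apply Quotient.sound
  apply c.compat
  intro i
  exact Quotient.mk_out (s := c.setoid) (as i)

/-- The canonical quotient homomorphism `A → A/θ`. -/
def conQuotMk (c : AlgCon L A) : A →[L] ConQuot c where
  toFun := ConQuot.mk c
  map_fun' := fun f x => (conQuot_funMap_mk c f x).symm
  map_rel' := fun _r x h => ⟨x, fun _ => rfl, h⟩

end Quotient

end Paper



open Paper

/-!
By compactness there is a finite set `s` of equations of the diagram of `T × T`, `T` the initial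
algebra of `V`, such that every map `w` from `T × T` into a product `A × B` of members of `V`
which respects `s` and sends `[0⃗,1⃗]` to `[0⃗,1⃗]` also sends `[1⃗,0⃗]` to `[1⃗,0⃗]`. Otherwise the
counterexamples for all finite `s` glue, in an ultraproduct `C`, to a homomorphism
`T × T → C` agreeing with the canonical one on `[0⃗,1⃗]`; stability by complements and the
uniqueness of complements of central elements (a consequence of BFC) then make them agree on
`[1⃗,0⃗]`, so almost all of the counterexamples are not counterexamples.

Hence `ρ(z⃗, x, y) := ∃ w (w respects s ∧ w[0⃗,1⃗] = z⃗ ∧ λ(w[1⃗,0⃗], x, y))` is existential, and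
at `z⃗ = [0⃗,1⃗]` in `A × B` it says `λ([1⃗,0⃗], x, y)`, which, swapping the factors, says `a = b`.
-/

namespace Paper

variable {L : FirstOrder.Language.{0, 0}} {E : Set (Identity L)} {Z : ZeroOneData L}

namespace AlgCon

variable {A : Type u} [L.Structure A]

instance : PartialOrder (AlgCon L A) where
  le c d := ∀ a b, c.r a b → d.r a b
  le_refl _ _ _ h := h
  le_trans _ _ _ h₁ h₂ a b h := h₂ a b (h₁ a b h)
  le_antisymm _ _ h₁ h₂ := ext' fun a b => ⟨h₁ a b, h₂ a b⟩

instance : Lattice (AlgCon L A) where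
  sup := sup
  inf := inf
  le_sup_left _ _ _ _ h _ hc := hc _ _ (Or.inl h)
  le_sup_right _ _ _ _ h _ hc := hc _ _ (Or.inr h)
  sup_le _ _ e hc hd _ _ h := h e fun x y hxy => hxy.elim (hc x y) (hd x y)
  inf_le_left _ _ _ _ h := h.1
  inf_le_right _ _ _ _ h := h.2
  le_inf _ _ _ h₁ h₂ a b h := ⟨h₁ a b h, h₂ a b h⟩

instance : BoundedOrder (AlgCon L A) where
  top := nabla L A
  le_top _ _ _ _ := trivial
  bot := delta L A
  bot_le c a _ h := h ▸ c.refl a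

theorem rel_of_le {c d : AlgCon L A} (h : c ≤ d) {a b : A} (hab : c.r a b) : d.r a b := h a b hab

end AlgCon

section FactorCongruences

variable {A : Type u} [L.Structure A]

theorem IsComplFC.symm {θ δ : AlgCon L A} (h : IsComplFC θ δ) : IsComplFC δ θ := by
  refine ⟨(inf_comm δ θ).trans h.1, fun a b => ?_⟩
  obtain ⟨z, hθ, hδ⟩ := h.2 b a
  exact ⟨z, δ.symm hδ, θ.symm hθ⟩

theorem IsComplFC.eq_of_rel {θ δ : AlgCon L A} (h : IsComplFC θ δ) {a b : A}
    (hθ : θ.r a b) (hδ : δ.r a b) : a = b := by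
  have hab : (θ ⊓ δ).r a b := ⟨hθ, hδ⟩
  rwa [show θ ⊓ δ = ⊥ from h.1] at hab

theorem IsBooleanSublattice.le_of_inf_eq_bot_of_sup_eq_top {S : Set (AlgCon L A)}
    (hS : IsBooleanSublattice S) {x y z : AlgCon L A} (hx : x ∈ S) (hy : y ∈ S) (hz : z ∈ S)
    (hxz : x ⊓ z = ⊥) (hyz : y ⊔ z = ⊤) : x ≤ y :=
  calc x = x ⊓ (y ⊔ z) := by rw [hyz, inf_top_eq]
    _ = x ⊓ y ⊔ x ⊓ z := hS.2.2.2.2.1 x hx y hy z hz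
    _ ≤ y := by rw [hxz, sup_bot_eq]; exact inf_le_right

end FactorCongruences

section Homomorphisms

variable {M N : Type*} [L.Structure M] [L.Structure N]

theorem map_realize_closed {F : Type*} [FunLike F M N] [HomClass L F M N] (g : F)
    (t : L.Term Empty) : g (t.realize Empty.elim) = t.realize Empty.elim := by
  rw [← HomClass.realize_term]
  congr 1
  exact funext fun x => x.elim

theorem map_zeroA {F : Type*} [FunLike F M N] [HomClass L F M N] (g : F) (Z : ZeroOneData L)
    (i : Fin Z.n) : g (Z.zeroA M i) = Z.zeroA N i :=
  map_realize_closed g (Z.zero i)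

theorem map_oneA {F : Type*} [FunLike F M N] [HomClass L F M N] (g : F) (Z : ZeroOneData L)
    (i : Fin Z.n) : g (Z.oneA M i) = Z.oneA N i :=
  map_realize_closed g (Z.one i)

end Homomorphisms

section Products

variable {A B C D : Type u} [L.Structure A] [L.Structure B] [L.Structure C] [L.Structure D]

def prodFst : A × B →[L] A where
  toFun := Prod.fst
  map_rel' _ _ h := h.1

def prodSnd : A × B →[L] B where
  toFun := Prod.snd
  map_rel' _ _ h := h.2

@[simp]
theorem prodFst_apply (p : A × B) : prodFst (L := L) p = p.1 := rfl

@[simp]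
theorem prodSnd_apply (p : A × B) : prodSnd (L := L) p = p.2 := rfl

def prodMap (f : A →[L] C) (g : B →[L] D) : A × B →[L] C × D where
  toFun p := (f p.1, g p.2)
  map_fun' F _ := Prod.ext (f.map_fun F _) (g.map_fun F _)
  map_rel' _ _ h := ⟨f.map_rel _ _ h.1, g.map_rel _ _ h.2⟩

def prodComm : A × B ≃[L] B × A where
  toEquiv := Equiv.prodComm A B
  map_rel' _ _ := and_comm

theorem zeroA_prod (Z : ZeroOneData L) (i : Fin Z.n) :
    Z.zeroA (A × B) i = (Z.zeroA A i, Z.zeroA B i) :=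
  Prod.ext (map_zeroA prodFst Z i) (map_zeroA prodSnd Z i)

theorem oneA_prod (Z : ZeroOneData L) (i : Fin Z.n) :
    Z.oneA (A × B) i = (Z.oneA A i, Z.oneA B i) :=
  Prod.ext (map_oneA prodFst Z i) (map_oneA prodSnd Z i)

theorem InVariety.prod (hA : InVariety E A) (hB : InVariety E B) : InVariety E (A × B) :=
  fun e he v => by
    have hfst (t : L.Term (Fin e.nvars)) : (t.realize v).1 = t.realize (Prod.fst ∘ v) :=
      (HomClass.realize_term (prodFst : A × B →[L] A)).symm
    have hsnd (t : L.Term (Fin e.nvars)) : (t.realize v).2 = t.realize (Prod.snd ∘ v) :=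
      (HomClass.realize_term (prodSnd : A × B →[L] B)).symm
    exact Prod.ext (by rw [hfst, hfst, hA e he]) (by rw [hsnd, hsnd, hB e he])

theorem InVariety.of_surjective (g : A →[L] B) (hg : Function.Surjective g)
    (hA : InVariety E A) : InVariety E B := fun e he v => by
  obtain ⟨w, rfl⟩ : ∃ w, g ∘ w = v := ⟨_, funext fun i => (hg (v i)).choose_spec⟩
  rw [HomClass.realize_term, HomClass.realize_term, hA e he]

variable (Z) (A B)

def ZeroOneData.zeroOne : Fin Z.n → A × B := fun i => (Z.zeroA A i, Z.oneA B i)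

def ZeroOneData.oneZero : Fin Z.n → A × B := fun i => (Z.oneA A i, Z.zeroA B i)

variable {Z} {A B}

theorem centDiamond_zeroOne_oneZero (hA : InVariety E A) (hB : InVariety E B) :
    CentDiamond E Z (A × B) (Z.zeroOne A B) (Z.oneZero A B) :=
  ⟨{ A₁ := A, A₂ := B, mem₁ := hA, mem₂ := hB, iso := .refl L (A × B),
     he := fun _ => rfl, hf := fun _ => rfl }⟩

theorem map_zeroOne (f : A →[L] C) (g : B →[L] D) (i : Fin Z.n) :
    prodMap f g (Z.zeroOne A B i) = Z.zeroOne C D i :=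
  Prod.ext (map_zeroA f Z i) (map_oneA g Z i)

theorem map_oneZero (f : A →[L] C) (g : B →[L] D) (i : Fin Z.n) :
    prodMap f g (Z.oneZero A B i) = Z.oneZero C D i :=
  Prod.ext (map_oneA f Z i) (map_zeroA g Z i)

end Products

section Complements

variable {A : Type u} [L.Structure A]

def AlgCon.ker {B : Type*} [L.Structure B] (g : A →[L] B) : AlgCon L A where
  r a b := g a = g b
  refl _ := rfl
  symm h := h.symm
  trans h₁ h₂ := h₁.trans h₂
  compat f x y h := by rw [g.map_fun, g.map_fun]; exact congrArg _ (funext h)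

theorem isComplFC_ker_fst_ker_snd {A₁ A₂ : Type u} [L.Structure A₁] [L.Structure A₂]
    (τ : A ≃[L] A₁ × A₂) :
    IsComplFC (AlgCon.ker (prodFst.comp τ.toHom)) (AlgCon.ker (prodSnd.comp τ.toHom)) := by
  refine ⟨AlgCon.ext' fun a b => ⟨fun h => τ.injective (Prod.ext h.1 h.2), ?_⟩, fun a b => ?_⟩
  · rintro rfl
    exact ⟨rfl, rfl⟩
  · refine ⟨τ.symm ((τ a).1, (τ b).2), ?_, ?_⟩ <;> simp [AlgCon.ker]

theorem ComplCentralWitness.pairFor {e f : Fin Z.n → A} (W : ComplCentralWitness E Z A e f) :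
    ∃ θ δ : AlgCon L A, PairFor Z A e θ δ ∧ PairFor Z A f δ θ := by
  let := W.s₁
  let := W.s₂
  have hτ : ∀ i, W.iso (Z.zeroA A i) = Z.zeroA _ i ∧ W.iso (Z.oneA A i) = Z.oneA _ i :=
    fun i => ⟨map_zeroA W.iso Z i, map_oneA W.iso Z i⟩
  have hc := isComplFC_ker_fst_ker_snd W.iso
  refine ⟨_, _, ⟨hc, fun i => ?_, fun i => ?_⟩, ⟨hc.symm, fun i => ?_, fun i => ?_⟩⟩ <;>
    simp [AlgCon.ker, W.he, W.hf, hτ, zeroA_prod, oneA_prod]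

theorem AlgCon.eq_top_of_rel_zeroA_oneA (hsep : Z.Separates.{u} E) (hA : InVariety E A)
    {c : AlgCon L A} (h : ∀ i, c.r (Z.zeroA A i) (Z.oneA A i)) : c = ⊤ := by
  have hq : InVariety E (ConQuot c) := hA.of_surjective (conQuotMk c) Quotient.mk_surjective
  have : Subsingleton (ConQuot c) := hsep _ hq fun i => by
    rw [← map_zeroA (conQuotMk c), ← map_oneA (conQuotMk c)]
    exact Quotient.sound (h i)
  exact top_unique fun a b _ => Quotient.exact (Subsingleton.elim (ConQuot.mk c a) (ConQuot.mk c b))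

variable (hsep : Z.Separates.{u} E) (hA : InVariety E A) (hB : IsBooleanSublattice (FC L A))
include hsep hA hB

theorem PairFor.le {e : Fin Z.n → A} {θ δ θ' δ' : AlgCon L A}
    (h : PairFor Z A e θ δ) (h' : PairFor Z A e θ' δ') : θ' ≤ θ ∧ δ' ≤ δ := by
  have hθδ' : θ ⊔ δ' = ⊤ := AlgCon.eq_top_of_rel_zeroA_oneA hsep hA fun i =>
    (θ ⊔ δ').trans (AlgCon.rel_of_le le_sup_left (θ.symm (h.2.1 i)))
      (AlgCon.rel_of_le le_sup_right (h'.2.2 i))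
  have hδθ' : δ ⊔ θ' = ⊤ := AlgCon.eq_top_of_rel_zeroA_oneA hsep hA fun i =>
    (δ ⊔ θ').symm <| (δ ⊔ θ').trans (AlgCon.rel_of_le le_sup_left (δ.symm (h.2.2 i)))
      (AlgCon.rel_of_le le_sup_right (h'.2.1 i))
  exact ⟨hB.le_of_inf_eq_bot_of_sup_eq_top ⟨δ', h'.1⟩ ⟨δ, h.1⟩ ⟨θ', h'.1.symm⟩ h'.1.1 hθδ',
    hB.le_of_inf_eq_bot_of_sup_eq_top ⟨θ', h'.1.symm⟩ ⟨θ, h.1.symm⟩ ⟨δ', h'.1⟩ h'.1.symm.1 hδθ'⟩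

theorem PairFor.unique {e : Fin Z.n → A} {θ δ θ' δ' : AlgCon L A}
    (h : PairFor Z A e θ δ) (h' : PairFor Z A e θ' δ') : θ = θ' ∧ δ = δ' :=
  ⟨le_antisymm (h'.le hsep hA hB h).1 (h.le hsep hA hB h').1,
    le_antisymm (h'.le hsep hA hB h).2 (h.le hsep hA hB h').2⟩

theorem CentDiamond.unique {e f f' : Fin Z.n → A}
    (h : CentDiamond E Z A e f) (h' : CentDiamond E Z A e f') : f = f' := by
  obtain ⟨θ, δ, he, hf⟩ := h.some.pairFor
  obtain ⟨θ', δ', he', hf'⟩ := h'.some.pairFor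
  obtain ⟨rfl, rfl⟩ := he.unique hsep hA hB he'
  funext i
  exact he.1.eq_of_rel (θ.trans (hf.2.2 i) (θ.symm (hf'.2.2 i)))
    (δ.trans (hf.2.1 i) (δ.symm (hf'.2.1 i)))

end Complements

theorem apply_eq_of_centDiamond (hsep : Z.Separates.{u} E) (hbfc : HasBFC.{u} E)
    (hstable : StableByComplements.{u} E Z) {D C : Type u} [L.Structure D] [L.Structure C]
    (hD : InVariety E D) (hC : InVariety E C) {e f : Fin Z.n → D} (hef : CentDiamond E Z D e f)
    (g h : D →[L] C) (he : ∀ i, g (e i) = h (e i)) (i : Fin Z.n) : g (f i) = h (f i) := by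
  have hg := hstable D C hD hC g e f hef
  have hh := hstable D C hD hC h e f hef
  rw [funext he] at hg
  exact congrFun (hg.unique hsep hC (hbfc C hC) hh) i

noncomputable def conQuotLift {A B : Type u} [L.Structure A] [L.Structure B] {c : AlgCon L A}
    (g : A →[L] B) (h : c ≤ AlgCon.ker g) : ConQuot c →[L] B where
  toFun := Quotient.lift (s := c.setoid) g h
  map_fun' f x := by
    obtain ⟨y, rfl⟩ : ∃ y, ConQuot.mk c ∘ y = x := ⟨_, funext fun i => Quotient.out_eq (x i)⟩
    exact (congrArg _ (conQuot_funMap_mk c f y)).trans (g.map_fun f y)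
  map_rel' r x := by
    rintro ⟨as, has, hr⟩
    rw [← funext has]
    exact g.map_rel r as hr

section InitialAlgebra

def ClosedTerm (L : FirstOrder.Language.{0, 0}) : Type u := ULift.{u} (L.Term Empty)

instance : L.Structure (ClosedTerm.{u} L) where
  funMap f x := ⟨func f fun i => (x i).down⟩
  RelMap _ _ := False

def ClosedTerm.eval (A : Type u) [L.Structure A] : ClosedTerm.{u} L →[L] A where
  toFun t := t.down.realize Empty.elim
  map_fun' _ _ := rfl
  map_rel' _ _ h := h.elim

variable (E)

def ClosedTerm.con : AlgCon L (ClosedTerm.{u} L) where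
  r s t := ∀ (A : Type u) [L.Structure A], InVariety E A → eval A s = eval A t
  refl _ _ _ _ := rfl
  symm h A _ hA := (h A hA).symm
  trans h₁ h₂ A _ hA := (h₁ A hA).trans (h₂ A hA)
  compat f x y h A _ hA := by
    rw [(eval A).map_fun, (eval A).map_fun]
    exact congrArg _ (funext fun i => h i A hA)

abbrev InitialAlg : Type u := ConQuot (ClosedTerm.con.{u} E)

theorem InitialAlg.inVariety : InVariety E (InitialAlg.{u} E) := fun e he v => by
  obtain ⟨σ, rfl⟩ : ∃ σ, ⇑(conQuotMk (ClosedTerm.con.{u} E)) ∘ σ = v :=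
    ⟨_, funext fun i => Quotient.out_eq (v i)⟩
  rw [HomClass.realize_term (conQuotMk _), HomClass.realize_term (conQuotMk _)]
  refine Quotient.sound fun A _ hA => ?_
  rw [← HomClass.realize_term, ← HomClass.realize_term, hA e he]

theorem InitialAlg.not_relMap {l : ℕ} (r : L.Relations l) (x : Fin l → InitialAlg.{u} E) :
    ¬RelMap r x :=
  fun ⟨_, _, h⟩ => h

noncomputable def InitialAlg.lift (A : Type u) [L.Structure A] (hA : InVariety E A) :
    InitialAlg.{u} E →[L] A :=
  conQuotLift (ClosedTerm.eval A) fun _ _ h => h A hA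

abbrev InitialPair : Type u := InitialAlg.{u} E × InitialAlg.{u} E

end InitialAlgebra

section Formulas

variable {α : Type*}

theorem isQF_iInf {β : Type*} [Finite β] {n : ℕ} {f : β → L.BoundedFormula α n}
    (hf : ∀ b, (f b).IsQF) : (BoundedFormula.iInf f).IsQF := by
  let := Fintype.ofFinite β
  suffices ∀ l : List β, (l.map f |>.foldr (· ⊓ ·) ⊤).IsQF from this _
  intro l
  induction l with
  | nil => exact BoundedFormula.IsQF.top
  | cons b l ih => exact (hf b).inf ih

theorem isQF_toFormula {n : ℕ} {φ : L.BoundedFormula α n} (h : φ.IsQF) : φ.toFormula.IsQF := by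
  induction h with
  | falsum => exact BoundedFormula.IsQF.falsum
  | of_isAtomic h =>
    cases h with
    | equal => exact (BoundedFormula.IsAtomic.equal _ _).isQF
    | rel => exact (BoundedFormula.IsAtomic.rel _ _).isQF
  | imp _ _ ih₁ ih₂ => exact ih₁.imp ih₂

theorem isExistentialForm_iExs {γ : Type*} [Finite γ] {φ : L.Formula (α ⊕ γ)} (h : φ.IsQF) :
    IsExistentialForm (φ.iExs γ) :=
  ⟨_, _, h.relabel _, rfl⟩

end Formulas

section Diagram

variable {M N : Type*} [L.Structure M] [L.Structure N]

/-- An operation symbol with arguments `x⃗` from `M`; it stands for the equation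
`f(x⃗) = f^M(x⃗)` of the diagram of `M`. -/
abbrev OpApp (L : FirstOrder.Language.{0, 0}) (M : Type*) := Σ l, L.Functions l × (Fin l → M)

def RespectsOpApps (s : Finset (OpApp L M)) (w : M → N) : Prop :=
  ∀ j ∈ s, w (funMap j.2.1 j.2.2) = funMap j.2.1 (w ∘ j.2.2)

theorem HomClass.respectsOpApps {F : Type*} [FunLike F M N] [HomClass L F M N] (g : F)
    (s : Finset (OpApp L M)) : RespectsOpApps s g :=
  fun j _ => HomClass.map_fun g j.2.1 j.2.2

def OpApp.formula {γ : Type*} (j : OpApp L M) (x : M → γ) : L.Formula γ :=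
  (func j.2.1 fun i => var (x (j.2.2 i))).equal (var (x (funMap j.2.1 j.2.2)))

theorem OpApp.realize_formula {γ : Type*} (j : OpApp L M) (x : M → γ) (v : γ → N) :
    (j.formula x).Realize v ↔ funMap j.2.1 (v ∘ x ∘ j.2.2) = v (x (funMap j.2.1 j.2.2)) :=
  Formula.realize_equal

theorem OpApp.isQF_formula {γ : Type*} (j : OpApp L M) (x : M → γ) : (j.formula x).IsQF :=
  (BoundedFormula.IsAtomic.equal _ _).isQF

variable {β : Type*} {n m : ℕ}

/-- The matrix of `∃ y⃗ u⃗, (y⃗ solves s) ∧ z⃗ = y⃗_e ∧ ψ(y⃗_f, t⃗, u⃗)`, with free variables `z⃗, t⃗`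
and one variable `y_p` for each `p : M`. -/
noncomputable def diagramMatrix (s : Finset (OpApp L M)) (e f : Fin n → M)
    (ψ : L.BoundedFormula (Fin n ⊕ β) m) : L.Formula ((Fin n ⊕ β) ⊕ (M ⊕ Fin m)) :=
  Formula.iInf (fun j : s => j.1.formula (Sum.inr ∘ Sum.inl)) ⊓
    Formula.iInf (fun i => (var (Sum.inl (Sum.inl i))).equal (var (Sum.inr (Sum.inl (e i))))) ⊓
    ψ.toFormula.relabel
      (Sum.elim (Sum.elim (Sum.inr ∘ Sum.inl ∘ f) (Sum.inl ∘ Sum.inr)) (Sum.inr ∘ Sum.inr))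

theorem isQF_diagramMatrix (s : Finset (OpApp L M)) (e f : Fin n → M)
    {ψ : L.BoundedFormula (Fin n ⊕ β) m} (hψ : ψ.IsQF) : (diagramMatrix s e f ψ).IsQF :=
  ((isQF_iInf fun j => j.1.isQF_formula _).inf
    (isQF_iInf fun _ => (BoundedFormula.IsAtomic.equal _ _).isQF)).inf
    ((isQF_toFormula hψ).relabel _)

theorem realize_diagramMatrix (s : Finset (OpApp L M)) (e f : Fin n → M)
    (ψ : L.BoundedFormula (Fin n ⊕ β) m) (v : Fin n ⊕ β → N) (w : M → N) (xs : Fin m → N) :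
    (diagramMatrix s e f ψ).Realize (Sum.elim v (Sum.elim w xs)) ↔
      RespectsOpApps s w ∧ (∀ i, v (Sum.inl i) = w (e i)) ∧
        ψ.Realize (Sum.elim (w ∘ f) (v ∘ Sum.inr)) xs := by
  simp only [diagramMatrix, Formula.realize_inf, Formula.realize_iInf, OpApp.realize_formula,
    Formula.realize_equal, Formula.realize_relabel, BoundedFormula.realize_toFormula]
  have hval : (Sum.elim v (Sum.elim w xs) ∘ Sum.elim (Sum.elim (Sum.inr ∘ Sum.inl ∘ f)
      (Sum.inl ∘ Sum.inr)) (Sum.inr ∘ Sum.inr)) ∘ Sum.inl = Sum.elim (w ∘ f) (v ∘ Sum.inr) := by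
    ext (_ | _) <;> rfl
  rw [hval, and_assoc]
  exact and_congr ⟨fun h j hj => (h ⟨j, hj⟩).symm, fun h j => (h j.1 j.2).symm⟩ Iff.rfl

/-- Only the finitely many elements `S` of `M` mentioned by `s`, `e`, `f` need a variable; the
variables `y_p` of `diagramMatrix` are renamed along a retraction `M → S`. -/
theorem IsExistentialForm.exists_iff_diagram [Nonempty M] (s : Finset (OpApp L M))
    (e f : Fin n → M) {φ : L.Formula (Fin n ⊕ β)} (hφ : IsExistentialForm φ) :
    ∃ ρ : L.Formula (Fin n ⊕ β), IsExistentialForm ρ ∧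
      ∀ {N : Type*} [L.Structure N] (v : Fin n ⊕ β → N), ρ.Realize v ↔
        ∃ w : M → N, RespectsOpApps s w ∧ (∀ i, v (Sum.inl i) = w (e i)) ∧
          φ.Realize (Sum.elim (w ∘ f) (v ∘ Sum.inr)) := by
  classical
  obtain ⟨m, ψ, hψ, rfl⟩ := hφ
  let S : Finset M := insert (Classical.arbitrary M) <|
    (s.biUnion fun j => insert (funMap j.2.1 j.2.2) (Finset.univ.image j.2.2)) ∪
      Finset.univ.image e ∪ Finset.univ.image f
  let r : M → S := fun p => if h : p ∈ S then ⟨p, h⟩ else ⟨_, Finset.mem_insert_self _ _⟩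
  have hr : ∀ p ∈ S, (r p : M) = p := fun p hp => by simp [r, hp]
  have hres : ∀ j ∈ s, funMap j.2.1 j.2.2 ∈ S := fun j hj => by
    simp only [S, Finset.mem_insert, Finset.mem_union, Finset.mem_biUnion]
    exact Or.inr (Or.inl (Or.inl ⟨j, hj, Or.inl rfl⟩))
  have harg : ∀ j ∈ s, ∀ i, j.2.2 i ∈ S := fun j hj i => by
    simp only [S, Finset.mem_insert, Finset.mem_union, Finset.mem_biUnion]
    exact Or.inr (Or.inl (Or.inl ⟨j, hj, Or.inr (Finset.mem_image_of_mem _ (Finset.mem_univ i))⟩))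
  have he : ∀ i, e i ∈ S := fun i => by simp [S]
  have hf : ∀ i, f i ∈ S := fun i => by simp [S]
  refine ⟨((diagramMatrix s e f ψ).relabel (Sum.map id (Sum.map r id))).iExs (S ⊕ Fin m),
    isExistentialForm_iExs ((isQF_diagramMatrix s e f hψ).relabel _), fun {N} _ v => ?_⟩
  have hcomp (W : S ⊕ Fin m → N) : Sum.elim v W ∘ Sum.map id (Sum.map r id) =
      Sum.elim v (Sum.elim (W ∘ Sum.inl ∘ r) (W ∘ Sum.inr)) := by
    ext (_ | _ | _) <;> rfl
  simp only [Formula.realize_iExs, Formula.realize_relabel, BoundedFormula.realize_exs, hcomp,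
    realize_diagramMatrix]
  constructor
  · rintro ⟨W, hresp, hpin, hψ⟩
    exact ⟨_, hresp, hpin, _, hψ⟩
  · rintro ⟨w, hresp, hpin, xs, hψ⟩
    have hwr : ∀ p ∈ S, w (r p) = w p := fun p hp => congrArg w (hr p hp)
    refine ⟨Sum.elim (w ∘ Subtype.val) xs, fun j hj => ?_, fun i => ?_, ?_⟩
    · change w (r _) = funMap j.2.1 fun i => w (r (j.2.2 i))
      rw [hwr _ (hres j hj), funext fun i => hwr _ (harg j hj i)]
      exact hresp j hj
    · exact (hpin i).trans (hwr _ (he i)).symm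
    · rwa [show (Sum.elim (w ∘ Subtype.val) xs ∘ Sum.inl ∘ r) ∘ f = w ∘ f from
        funext fun i => hwr _ (hf i)]

end Diagram

section Ultraproducts

variable {ι : Type u} {U : Ultrafilter ι} {C : ι → Type u} [∀ s, L.Structure (C s)]

theorem InVariety.ultraproduct (h : ∀ s, InVariety E (C s)) :
    InVariety E ((U : Filter ι).Product C) := fun e he v => by
  obtain ⟨x, rfl⟩ : ∃ x : Fin e.nvars → ∀ s, C s, (fun i => (x i : (U : Filter ι).Product C)) = v :=
    ⟨fun i => (v i).out, funext fun i => Quotient.out_eq (v i)⟩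
  refine (Ultraproduct.term_realize_cast x e.lhs).trans
    (Eq.trans ?_ (Ultraproduct.term_realize_cast x e.rhs).symm)
  exact congrArg _ (funext fun s => h s e he _)

def ultraproductHom {M : Type*} [L.Structure M] (w : ∀ s, M → C s)
    (hfun : ∀ j : OpApp L M, ∀ᶠ s in U, RespectsOpApps {j} (w s))
    (hrel : ∀ {l} (r : L.Relations l) (x : Fin l → M), RelMap r x → ∀ᶠ s in U, RelMap r (w s ∘ x)) :
    M →[L] (U : Filter ι).Product C where
  toFun p := ((fun s => w s p : ∀ s, C s) : (U : Filter ι).Product C)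
  map_fun' f x := by
    refine Eq.trans ?_ (Ultraproduct.funMap_cast (u := U) f fun i s => w s (x i)).symm
    exact Quotient.sound <| (hfun ⟨_, f, x⟩).mono fun s hs => hs _ (Finset.mem_singleton_self _)
  map_rel' r x h :=
    (relMap_quotient_mk' (L := L) ((U : Filter ι).productSetoid C) r _).2 (hrel r x h)

end Ultraproducts

variable (E Z) in
def ForcesComplement (s : Finset (OpApp L (InitialPair.{u} E))) : Prop :=
  ∀ (A B : Type u) [L.Structure A] [L.Structure B], InVariety E A → InVariety E B →
    ∀ w : InitialPair.{u} E → A × B, RespectsOpApps s w →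
      (∀ i, w (Z.zeroOne _ _ i) = Z.zeroOne A B i) → ∀ i, w (Z.oneZero _ _ i) = Z.oneZero A B i

theorem exists_forcesComplement (hsep : Z.Separates.{u} E) (hbfc : HasBFC.{u} E)
    (hstable : StableByComplements.{u} E Z) : ∃ s, ForcesComplement.{u} E Z s := by
  by_contra! hno
  simp only [ForcesComplement, not_forall] at hno
  choose A B iA iB hA hB w hresp hpin i hbad using hno
  let U : Ultrafilter (Finset (OpApp L (InitialPair.{u} E))) := .of Filter.atTop
  have hU (j : OpApp L (InitialPair.{u} E)) : ∀ᶠ s in (U : Filter (Finset _)), j ∈ s :=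
    .filter_mono (Ultrafilter.of_le _) <| (Filter.eventually_ge_atTop {j}).mono fun _ hs =>
      Finset.singleton_subset_iff.1 hs
  have hT := InitialAlg.inVariety.{u} E
  have hC : InVariety E ((U : Filter _).Product fun s => A s × B s) :=
    InVariety.ultraproduct fun s => (hA s).prod (hB s)
  let h := ultraproductHom (U := U) w
    (fun j => (hU j).mono fun s hs k hk => hresp s k (Finset.mem_singleton.1 hk ▸ hs))
    (fun r _ hx => (InitialAlg.not_relMap E r _ hx.1).elim)
  let g := ultraproductHom (U := U)
    (fun s => prodMap (InitialAlg.lift E (A s) (hA s)) (InitialAlg.lift E (B s) (hB s)))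
    (fun _ => .of_forall fun _ => HomClass.respectsOpApps _ _)
    (fun r x hx => .of_forall fun _ => Hom.map_rel _ r x hx)
  have hgf := apply_eq_of_centDiamond hsep hbfc hstable (hT.prod hT) hC
    (centDiamond_zeroOne_oneZero hT hT) g h
    (fun i => Quotient.sound <| .of_forall fun s => (map_zeroOne _ _ i).trans (hpin s i).symm)
  obtain ⟨s, hs⟩ := (Filter.eventually_all.2 fun i =>
    (Quotient.exact (hgf i)).mono fun s hs => hs.symm.trans (map_oneZero _ _ i)).exists
  exact hbad s (hs (i s))

theorem RightFormulaWorks.realize_oneZero {φ : L.Formula (Fin Z.n ⊕ Fin 2)}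
    (h : RightFormulaWorks.{u} E Z φ) {A B : Type u} [L.Structure A] [L.Structure B]
    (hA : InVariety E A) (hB : InVariety E B) (a b : A) (c d : B) :
    φ.Realize (Sum.elim (Z.oneZero A B) ![(a, c), (b, d)]) ↔ a = b := by
  have hv : Sum.elim (Z.oneZero A B) ![(a, c), (b, d)] =
      (prodComm : B × A ≃[L] A × B) ∘ Sum.elim (Z.zeroOne B A) ![(c, a), (d, b)] := by
    funext x
    rcases x with _ | k
    · rfl
    · fin_cases k <;> rfl
  rw [hv, StrongHomClass.realize_formula]
  exact h B A hB hA c d a b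

theorem ForcesComplement.exists_leftFormulaWorks {s : Finset (OpApp L (InitialPair.{u} E))}
    (hs : ForcesComplement E Z s) {lam : L.Formula (Fin Z.n ⊕ Fin 2)}
    (hlam : IsExistentialForm lam) (hright : RightFormulaWorks.{u} E Z lam) :
    ∃ rho : L.Formula (Fin Z.n ⊕ Fin 2), IsExistentialForm rho ∧ LeftFormulaWorks.{u} E Z rho := by
  have : Nonempty (InitialPair.{u} E) := ⟨Z.zeroOne _ _ ⟨0, Z.npos⟩⟩
  obtain ⟨rho, hrho, hreal⟩ := hlam.exists_iff_diagram s (Z.zeroOne _ _) (Z.oneZero _ _)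
  refine ⟨rho, hrho, fun A B _ _ hA hB a b c d => ?_⟩
  rw [hreal, ← hright.realize_oneZero hA hB a b c d]
  constructor
  · rintro ⟨w, hw, hpin, hlam⟩
    rwa [show w ∘ Z.oneZero _ _ = Z.oneZero A B from
      funext (hs A B hA hB w hw fun i => (hpin i).symm)] at hlam
  · intro hlam
    refine ⟨prodMap (InitialAlg.lift E A hA) (InitialAlg.lift E B hB),
      HomClass.respectsOpApps _ _, fun i => (map_zeroOne _ _ i).symm, ?_⟩
    rwa [show _ ∘ Z.oneZero _ _ = Z.oneZero A B from funext (map_oneZero _ _)]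

end Paper

theorem statement3_general (L : FirstOrder.Language.{0, 0})
    (E : Set (Identity L)) (Z : ZeroOneData L)
    (hsep : ZeroOneData.Separates.{u} Z E) (hrex : HasRexDFC.{u} E Z)
    (hstable : StableByComplements.{u} E Z) :
    ∃ lam rho : L.Formula ((Fin Z.n) ⊕ (Fin 2)),
      IsExistentialForm lam ∧ IsExistentialForm rho ∧
      RightFormulaWorks.{u} E Z lam ∧ LeftFormulaWorks.{u} E Z rho := by
  obtain ⟨hbfc, lam, hlam, hright⟩ := hrex
  obtain ⟨s, hs⟩ := exists_forcesComplement hsep hbfc hstable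
  obtain ⟨rho, hrho, hleft⟩ := hs.exists_leftFormulaWorks hlam hright
  exact ⟨lam, rho, hlam, hrho, hright, hleft⟩

/-- Every variety with RexDFC that is stable by complements has
TexDFC: there are existential formulas λ and ρ defining factor congruences on
the right and on the left. -/
theorem statement3 (L : FirstOrder.Language.{0, 0}) [L.IsAlgebraic]
    [Finite (Σ n, L.Functions n)]
    (E : Set (Identity L)) (Z : ZeroOneData L)
    (hsep : ZeroOneData.Separates.{u} Z E) (hrex : HasRexDFC.{u} E Z)
    (hstable : StableByComplements.{u} E Z) :
    ∃ lam rho : L.Formula ((Fin Z.n) ⊕ (Fin 2)),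
      IsExistentialForm lam ∧ IsExistentialForm rho ∧
      RightFormulaWorks.{u} E Z lam ∧ LeftFormulaWorks.{u} E Z rho :=
  statement3_general L E Z hsep hrex hstable
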